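/- The set 𝒜̄⁺₁ := {φ ∈ H¹(ℝ²) : S₁(φ) < S₁(Q₁), P₁(φ) ≥ 0} satisfies 𝒜̄⁺₁ = 𝒜⁺₁ ∪ {0}, and 𝒜̄⁺₁ is an open subset of H¹(ℝ²). -/

import Mathlib

/-! If `P₁(ψ) < 0`, then `P₁(cψ) > 0` for small `c > 0`, because `‖cψ‖₂² = c²‖ψ‖₂²` while
`F₁(cz) ≤ c⁶ F₁(z)`; hence `P₁(cψ) = 0` for some `0 < c < 1`, and the variational characterisation
gives `S₁(Q₁) ≤ S₁(cψ) = c²‖∇ψ‖₂²/2 < ‖∇ψ‖₂²/2`. On `𝒜̄⁺₁` we have `‖∇φ‖₂² ≤ 2S₁(φ) < 2S₁(Q₁)`,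
and both `‖∇·‖₂²` and `S₁` are upper semicontinuous on `H¹ ∩ {e^{a|u|²} - 1 ∈ L¹}` (for `S₁`
because `F₁(z) - F₁(w) ≤ |z| e^{4π|z|²} |z - w|`), so both conditions persist near `φ`.
The identity `𝒜̄⁺₁ = 𝒜⁺₁ ∪ {0}` is just the same characterisation applied with `P₁(φ) = 0`. -/

open MeasureTheory Real Filter
open scoped Topology ENNReal

noncomputable section

abbrev E2 : Type := EuclideanSpace ℝ (Fin 2)

/-- Squared `L²` norm. -/
def l2Sq (u : E2 → ℂ) : ℝ := ∫ x : E2, ‖u x‖ ^ 2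

/-- Squared `L²` norm of the gradient. -/
def gradSq (u : E2 → ℂ) : ℝ := ∫ x : E2, ‖fderiv ℝ u x‖ ^ 2

/-- Membership in `H¹(ℝ²)`. -/
def MemH1 (u : E2 → ℂ) : Prop :=
  MemLp u 2 volume ∧ Differentiable ℝ u ∧ MemLp (fun x => fderiv ℝ u x) 2 volume

/-- Integrability of all exponentials `e^{a|u|²} - 1`. -/
def ExpIntegrable (u : E2 → ℂ) : Prop :=
  ∀ a : ℝ, 0 < a → Integrable (fun x : E2 => Real.exp (a * ‖u x‖ ^ 2) - 1)

/-- The nonlinearity `f_μ`. -/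
def fmu (μ : ℝ) (z : ℂ) : ℂ :=
  ((Real.exp (4 * π * ‖z‖ ^ 2) - 1 - 4 * π * μ * ‖z‖ ^ 2 : ℝ) : ℂ) * z

/-- The potential `F_μ`. -/
def Fmu (μ : ℝ) (z : ℂ) : ℝ :=
  (Real.exp (4 * π * ‖z‖ ^ 2) - 1 - 4 * π * ‖z‖ ^ 2 - 8 * π ^ 2 * μ * ‖z‖ ^ 4) / (8 * π)

/-- `Re (z̄ f_μ(z))`. -/
def nlDensity (μ : ℝ) (z : ℂ) : ℝ :=
  (Real.exp (4 * π * ‖z‖ ^ 2) - 1 - 4 * π * μ * ‖z‖ ^ 2) * ‖z‖ ^ 2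

/-- Energy. -/
def Emu (μ : ℝ) (u : E2 → ℂ) : ℝ := gradSq u / 2 - ∫ x : E2, Fmu μ (u x)

/-- Action. -/
def Smu (μ : ℝ) (u : E2 → ℂ) : ℝ := Emu μ u + l2Sq u / 2

/-- The functional `P_μ`. -/
def Pmu (μ : ℝ) (u : E2 → ℂ) : ℝ := l2Sq u / 2 - ∫ x : E2, Fmu μ (u x)

/-- The virial functional `I_μ`. -/
def Imu (μ : ℝ) (u : E2 → ℂ) : ℝ :=
  gradSq u - ∫ x : E2, (nlDensity μ (u x) - 2 * Fmu μ (u x))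

/-- Laplacian on `ℝ²` (sum of second directional derivatives). -/
def lap (v : E2 → ℂ) (x : E2) : ℂ :=
  ∑ i : Fin 2, fderiv ℝ (fun y => fderiv ℝ v y (EuclideanSpace.single i 1)) x
      (EuclideanSpace.single i 1)

/-- `φ` is a (pointwise) solution to the elliptic equation `-Δφ + φ = f_μ(φ)`. -/
def IsEllipticSolution (μ : ℝ) (φ : E2 → ℂ) : Prop :=
  ∀ x, -lap φ x + φ x = fmu μ (φ x)

/-- Ground state for `-ΔQ + Q = f_μ(Q)`. -/
structure IsGroundState (μ : ℝ) (Q : E2 → ℂ) : Prop where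
  mem : MemH1 Q
  expint : ExpIntegrable Q
  nonzero : ¬ Q =ᵐ[volume] (0 : E2 → ℂ)
  radial : ∀ x y : E2, ‖x‖ = ‖y‖ → Q x = Q y
  solves : IsEllipticSolution μ Q
  minimal : ∀ φ : E2 → ℂ, MemH1 φ → ExpIntegrable φ → ¬ φ =ᵐ[volume] (0 : E2 → ℂ) →
    IsEllipticSolution μ φ → Smu μ Q ≤ Smu μ φ
  grad_pos : 0 < gradSq Q
  grad_lt_one : gradSq Q < 1

def expTail (t : ℝ) : ℝ := exp t - 1 - t - t ^ 2 / 2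

lemma expTail_eq_tsum (t : ℝ) : expTail t = ∑' n : ℕ, t ^ (n + 3) / (n + 3).factorial := by
  have h := (Real.summable_pow_div_factorial t).sum_add_tsum_nat_add 3
  have hexp : exp t = ∑' n : ℕ, t ^ n / n.factorial := by
    rw [Real.exp_eq_exp_ℝ, NormedSpace.exp_eq_tsum_div]
  simp only [Finset.sum_range_succ, Finset.sum_range_zero] at h
  rw [expTail, hexp, ← h]
  norm_num [Nat.factorial]
  ring

lemma summable_pow_add_three_div_factorial (t : ℝ) :
    Summable fun n : ℕ => t ^ (n + 3) / (n + 3).factorial :=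
  (summable_nat_add_iff 3).2 (Real.summable_pow_div_factorial t)

lemma expTail_nonneg {t : ℝ} (ht : 0 ≤ t) : 0 ≤ expTail t := by
  rw [expTail_eq_tsum]
  exact tsum_nonneg fun n => by positivity

lemma expTail_mono {s t : ℝ} (hs : 0 ≤ s) (hst : s ≤ t) : expTail s ≤ expTail t := by
  rw [expTail_eq_tsum, expTail_eq_tsum]
  exact (summable_pow_add_three_div_factorial s).tsum_le_tsum (fun n => by gcongr)
    (summable_pow_add_three_div_factorial t)

lemma expTail_mul_le {r t : ℝ} (hr₀ : 0 ≤ r) (hr₁ : r ≤ 1) (ht : 0 ≤ t) :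
    expTail (r * t) ≤ r ^ 3 * expTail t := by
  rw [expTail_eq_tsum, expTail_eq_tsum, ← tsum_mul_left]
  refine (summable_pow_add_three_div_factorial _).tsum_le_tsum (fun n => ?_)
    ((summable_pow_add_three_div_factorial t).mul_left _)
  rw [mul_pow, mul_div_assoc]
  exact mul_le_mul_of_nonneg_right (pow_le_pow_of_le_one hr₀ hr₁ (by omega)) (by positivity)

lemma expTail_sub_le {s t : ℝ} (hs : 0 ≤ s) (hst : s ≤ t) :
    expTail t - expTail s ≤ (t - s) * exp t := by
  have hexp : exp t * (s - t + 1) ≤ exp s := by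
    rw [show exp s = exp t * exp (s - t) by rw [← exp_add]; ring_nf]
    exact mul_le_mul_of_nonneg_left (add_one_le_exp _) (exp_nonneg t)
  unfold expTail
  nlinarith

lemma Fmu_one_eq (z : ℂ) : Fmu 1 z = expTail (4 * π * ‖z‖ ^ 2) / (8 * π) := by
  rw [Fmu, expTail]; ring

lemma Fmu_one_nonneg (z : ℂ) : 0 ≤ Fmu 1 z := by
  rw [Fmu_one_eq]
  exact div_nonneg (expTail_nonneg (by positivity)) (by positivity)

lemma Fmu_one_le (z : ℂ) : Fmu 1 z ≤ (exp (4 * π * ‖z‖ ^ 2) - 1) / (8 * π) := by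
  rw [Fmu]
  refine div_le_div_of_nonneg_right ?_ (by positivity)
  have : 0 ≤ 4 * π * ‖z‖ ^ 2 + 8 * π ^ 2 * 1 * ‖z‖ ^ 4 := by positivity
  linarith

lemma Fmu_one_le_of_norm_le {z w : ℂ} (h : ‖z‖ ≤ ‖w‖) : Fmu 1 z ≤ Fmu 1 w := by
  rw [Fmu_one_eq, Fmu_one_eq]
  gcongr
  exact expTail_mono (by positivity) (by gcongr)

lemma Fmu_one_smul_le {c : ℝ} (hc₀ : 0 ≤ c) (hc₁ : c ≤ 1) (z : ℂ) :
    Fmu 1 (c • z) ≤ c ^ 6 * Fmu 1 z := by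
  have hnorm : 4 * π * ‖c • z‖ ^ 2 = c ^ 2 * (4 * π * ‖z‖ ^ 2) := by
    rw [norm_smul, Real.norm_eq_abs, mul_pow, sq_abs]; ring
  rw [Fmu_one_eq, Fmu_one_eq, hnorm, show c ^ 6 = (c ^ 2) ^ 3 by ring, ← mul_div_assoc]
  gcongr
  exact expTail_mul_le (by positivity) (pow_le_one₀ hc₀ hc₁) (by positivity)

/-- `F₁` is increasing in `|z|`, so only the case `|w| < |z|` needs the mean value bound. -/
lemma Fmu_one_sub_le (z w : ℂ) :
    Fmu 1 z - Fmu 1 w ≤ ‖z‖ * exp (4 * π * ‖z‖ ^ 2) * ‖z - w‖ := by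
  rcases le_or_gt ‖z‖ ‖w‖ with h | h
  · have := Fmu_one_le_of_norm_le h
    have : 0 ≤ ‖z‖ * exp (4 * π * ‖z‖ ^ 2) * ‖z - w‖ := by positivity
    linarith
  · have hsub := expTail_sub_le (s := 4 * π * ‖w‖ ^ 2) (t := 4 * π * ‖z‖ ^ 2) (by positivity)
      (by gcongr)
    have hdiff : 4 * π * ‖z‖ ^ 2 - 4 * π * ‖w‖ ^ 2 ≤ 8 * π * ‖z‖ * ‖z - w‖ := by
      have := mul_le_mul (by linarith : ‖z‖ + ‖w‖ ≤ 2 * ‖z‖) (norm_sub_norm_le z w)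
        (by linarith) (by positivity)
      nlinarith [pi_pos]
    rw [Fmu_one_eq, Fmu_one_eq, ← sub_div, div_le_iff₀ (by positivity)]
    calc expTail (4 * π * ‖z‖ ^ 2) - expTail (4 * π * ‖w‖ ^ 2)
        ≤ (8 * π * ‖z‖ * ‖z - w‖) * exp (4 * π * ‖z‖ ^ 2) :=
          hsub.trans (mul_le_mul_of_nonneg_right hdiff (exp_nonneg _))
      _ = _ := by ring

lemma continuous_Fmu (μ : ℝ) : Continuous (Fmu μ) := by
  unfold Fmu; fun_prop

lemma mul_exp_le_exp_sub_one {s a : ℝ} (hs : 0 ≤ s) (ha : 0 ≤ a) :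
    s * exp (a * s) ≤ exp ((a + 1) * s) - 1 := by
  have h1 : 1 ≤ exp (a * s) := one_le_exp (by positivity)
  have h2 : s * exp (a * s) ≤ (exp s - 1) * exp (a * s) :=
    mul_le_mul_of_nonneg_right (by linarith [add_one_le_exp s]) (exp_nonneg _)
  rw [show (a + 1) * s = s + a * s by ring, exp_add]
  nlinarith

lemma ExpIntegrable.integrable_Fmu_one {u : E2 → ℂ} (hu : ExpIntegrable u)
    (hmeas : AEStronglyMeasurable u volume) : Integrable fun x => Fmu 1 (u x) := by
  refine ((hu (4 * π) (by positivity)).div_const (8 * π)).mono'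
    ((continuous_Fmu 1).comp_aestronglyMeasurable hmeas) (ae_of_all _ fun x => ?_)
  rw [Real.norm_eq_abs, abs_of_nonneg (Fmu_one_nonneg _)]
  exact Fmu_one_le (u x)

lemma ExpIntegrable.integrable_sq_norm_mul_exp {u : E2 → ℂ} (hu : ExpIntegrable u)
    (hmeas : AEStronglyMeasurable u volume) {a : ℝ} (ha : 0 ≤ a) :
    Integrable fun x => ‖u x‖ ^ 2 * exp (a * ‖u x‖ ^ 2) := by
  refine (hu (a + 1) (by positivity)).mono' (by fun_prop) (ae_of_all _ fun x => ?_)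
  rw [Real.norm_eq_abs, abs_of_nonneg (by positivity)]
  exact mul_exp_le_exp_sub_one (by positivity) ha

lemma ExpIntegrable.smul {u : E2 → ℂ} (hu : ExpIntegrable u) {c : ℝ} (hc : c ≠ 0) :
    ExpIntegrable fun x => c • u x := by
  intro a ha
  refine (hu (a * c ^ 2) (by positivity)).congr (ae_of_all _ fun x => ?_)
  simp only [norm_smul, Real.norm_eq_abs, mul_pow, sq_abs]
  ring_nf

lemma MemH1.smul {u : E2 → ℂ} (hu : MemH1 u) (c : ℝ) : MemH1 fun x => c • u x := by
  obtain ⟨hu₂, hud, hug⟩ := hu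
  refine ⟨hu₂.const_smul c, hud.const_smul c, ?_⟩
  simp only [fderiv_fun_const_smul (hud _)]
  exact hug.const_smul c

lemma MemH1.eq_zero_of_ae_eq_zero {u : E2 → ℂ} (hu : MemH1 u) (h : u =ᵐ[volume] 0) : u = 0 :=
  (Continuous.ae_eq_iff_eq volume hu.2.1.continuous continuous_const).1 h

lemma l2Sq_nonneg (u : E2 → ℂ) : 0 ≤ l2Sq u :=
  integral_nonneg fun _ => by positivity

lemma gradSq_nonneg (u : E2 → ℂ) : 0 ≤ gradSq u :=
  integral_nonneg fun _ => by positivity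

lemma ae_eq_zero_of_l2Sq_eq_zero {u : E2 → ℂ} (hu : MemLp u 2 volume) (h : l2Sq u = 0) :
    u =ᵐ[volume] 0 := by
  have h0 := (integral_eq_zero_iff_of_nonneg (fun x => by positivity)
    (hu.integrable_norm_pow two_ne_zero)).1 h
  filter_upwards [h0] with x hx
  simpa using hx

lemma l2Sq_smul (c : ℝ) (u : E2 → ℂ) : l2Sq (fun x => c • u x) = c ^ 2 * l2Sq u := by
  rw [l2Sq, l2Sq, ← integral_const_mul]
  simp only [norm_smul, Real.norm_eq_abs, mul_pow, sq_abs]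

lemma gradSq_smul (c : ℝ) {u : E2 → ℂ} (hu : Differentiable ℝ u) :
    gradSq (fun x => c • u x) = c ^ 2 * gradSq u := by
  rw [gradSq, gradSq, ← integral_const_mul]
  simp only [fderiv_fun_const_smul (hu _), norm_smul, Real.norm_eq_abs, mul_pow, sq_abs]

lemma Pmu_one_smul (c : ℝ) (ψ : E2 → ℂ) :
    Pmu 1 (fun x => c • ψ x) = c ^ 2 * l2Sq ψ / 2 - ∫ x, Fmu 1 (c • ψ x) := by
  rw [Pmu, l2Sq_smul]

lemma Smu_one_eq (u : E2 → ℂ) : Smu 1 u = gradSq u / 2 + Pmu 1 u := by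
  rw [Smu, Emu, Pmu]; ring

lemma Smu_one_zero : Smu 1 0 = 0 := by
  simp [Smu, Emu, l2Sq, gradSq, Fmu]

lemma Pmu_one_zero : Pmu 1 0 = 0 := by
  simp [Pmu, l2Sq, Fmu]

section Scaling

variable {ψ : E2 → ℂ}

lemma integral_Fmu_one_smul_le (hψ : ExpIntegrable ψ) (hmeas : AEStronglyMeasurable ψ volume)
    {c : ℝ} (hc₀ : 0 ≤ c) (hc₁ : c ≤ 1) :
    ∫ x, Fmu 1 (c • ψ x) ≤ c ^ 6 * ∫ x, Fmu 1 (ψ x) := by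
  rw [← integral_const_mul]
  exact integral_mono_of_nonneg (ae_of_all _ fun x => Fmu_one_nonneg _)
    ((hψ.integrable_Fmu_one hmeas).const_mul _) (ae_of_all _ fun x => Fmu_one_smul_le hc₀ hc₁ _)

lemma continuousOn_integral_Fmu_one_smul (hψ : ExpIntegrable ψ)
    (hmeas : AEStronglyMeasurable ψ volume) :
    ContinuousOn (fun c : ℝ => ∫ x, Fmu 1 (c • ψ x)) (Set.Icc 0 1) := by
  refine continuousOn_of_dominated
    (fun c _ => (continuous_Fmu 1).comp_aestronglyMeasurable (hmeas.const_smul c))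
    (fun c hc => ae_of_all _ fun x => ?_) (hψ.integrable_Fmu_one hmeas)
    (ae_of_all _ fun x =>
      ((continuous_Fmu 1).comp (continuous_id.smul continuous_const)).continuousOn)
  rw [Real.norm_eq_abs, abs_of_nonneg (Fmu_one_nonneg _)]
  refine Fmu_one_le_of_norm_le ?_
  rw [norm_smul, Real.norm_of_nonneg hc.1]
  exact mul_le_of_le_one_left (norm_nonneg _) hc.2

lemma exists_Pmu_one_smul_eq_zero (hψ : MemH1 ψ) (hψe : ExpIntegrable ψ) (hP : Pmu 1 ψ < 0) :
    ∃ c ∈ Set.Ioo (0 : ℝ) 1, Pmu 1 (fun x => c • ψ x) = 0 := by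
  have hmeas := hψ.1.aestronglyMeasurable
  have hL : 0 < l2Sq ψ := by
    refine (l2Sq_nonneg ψ).lt_of_ne' fun h => ?_
    rw [hψ.eq_zero_of_ae_eq_zero (ae_eq_zero_of_l2Sq_eq_zero hψ.1 h), Pmu_one_zero] at hP
    exact hP.false
  set N := ∫ x, Fmu 1 (ψ x)
  have hsmall : ∀ᶠ t in 𝓝[>] (0 : ℝ), t ^ 4 * N < l2Sq ψ / 2 ∧ t < 1 := by
    have hlim : Tendsto (fun t : ℝ => t ^ 4 * N) (𝓝 0) (𝓝 0) := by
      convert ((continuous_pow 4).tendsto (0 : ℝ)).mul_const N using 2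
      simp
    exact nhdsWithin_le_nhds ((hlim.eventually (gt_mem_nhds (by positivity))).and
      (eventually_lt_nhds zero_lt_one))
  obtain ⟨t₀, ⟨ht₀N, ht₀₁⟩, ht₀⟩ := (hsmall.and self_mem_nhdsWithin).exists
  set g : ℝ → ℝ := fun c => c ^ 2 * l2Sq ψ / 2 - ∫ x, Fmu 1 (c • ψ x)
  have hg₀ : 0 < g t₀ := by
    have := integral_Fmu_one_smul_le hψe hmeas (le_of_lt ht₀) ht₀₁.le
    have : 0 < t₀ ^ 2 * (l2Sq ψ / 2 - t₀ ^ 4 * N) := mul_pos (by positivity) (by linarith)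
    simp only [g]
    nlinarith
  have hg₁ : g 1 = Pmu 1 ψ := by simp [g, Pmu]
  have hgcont : ContinuousOn g (Set.Icc t₀ 1) :=
    (continuous_id.pow 2 |>.mul continuous_const |>.div_const 2).continuousOn.sub
      ((continuousOn_integral_Fmu_one_smul hψe hmeas).mono
        (Set.Icc_subset_Icc (le_of_lt ht₀) le_rfl))
  obtain ⟨c, hc, hgc⟩ := intermediate_value_Icc' ht₀₁.le hgcont ⟨hg₁ ▸ hP.le, hg₀.le⟩
  refine ⟨c, ⟨lt_of_lt_of_le ht₀ hc.1, hc.2.lt_of_ne ?_⟩, (Pmu_one_smul c ψ).trans hgc⟩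
  rintro rfl
  exact hP.ne (hg₁ ▸ hgc)

lemma two_mul_lt_gradSq_of_Pmu_one_neg {m : ℝ} (hm : 0 < m)
    (hlow : ∀ φ : E2 → ℂ, MemH1 φ → ExpIntegrable φ → ¬ φ =ᵐ[volume] 0 → Pmu 1 φ = 0 →
      m ≤ Smu 1 φ)
    (hψ : MemH1 ψ) (hψe : ExpIntegrable ψ) (hP : Pmu 1 ψ < 0) : 2 * m < gradSq ψ := by
  obtain ⟨c, ⟨hc₀, hc₁⟩, hPc⟩ := exists_Pmu_one_smul_eq_zero hψ hψe hP
  have hne : ¬ (fun x => c • ψ x) =ᵐ[volume] 0 := by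
    intro h
    have hψ0 : ψ = 0 := funext fun x =>
      (smul_eq_zero.1 (congrFun ((hψ.smul c).eq_zero_of_ae_eq_zero h) x)).resolve_left hc₀.ne'
    rw [hψ0, Pmu_one_zero] at hP
    exact hP.false
  have hS := hlow _ (hψ.smul c) (hψe.smul hc₀.ne') hne hPc
  rw [Smu_one_eq, hPc, gradSq_smul c hψ.2.1] at hS
  have hG : 0 < gradSq ψ := by nlinarith
  nlinarith [mul_lt_mul_of_pos_right (pow_lt_one₀ hc₀.le hc₁ two_ne_zero) hG]

end Scaling

section Perturbation

lemma two_mul_mul_le_mul_sq_add_sq_div (x y : ℝ) {c : ℝ} (hc : 0 < c) :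
    2 * x * y ≤ c * x ^ 2 + y ^ 2 / c := by
  have hsq : 0 ≤ (c * x - y) ^ 2 / c := by positivity
  have hexp : (c * x - y) ^ 2 / c = c * x ^ 2 - 2 * x * y + y ^ 2 / c := by field_simp; ring
  linarith

lemma norm_sq_le_add_norm_sub_sq {F : Type*} [SeminormedAddCommGroup F] (a b : F) {c : ℝ}
    (hc : 0 < c) : ‖b‖ ^ 2 ≤ (1 + c) * ‖a‖ ^ 2 + (1 + 1 / c) * ‖b - a‖ ^ 2 := by
  have htri := norm_le_norm_add_norm_sub' b a
  have := two_mul_mul_le_mul_sq_add_sq_div ‖a‖ ‖b - a‖ hc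
  have : ‖b‖ ^ 2 ≤ (‖a‖ + ‖b - a‖) ^ 2 := by gcongr
  linarith [show (1 + 1 / c) * ‖b - a‖ ^ 2 = ‖b - a‖ ^ 2 + ‖b - a‖ ^ 2 / c by ring]

lemma integral_norm_sq_le_add {α F : Type*} [MeasurableSpace α] {μ : Measure α}
    [NormedAddCommGroup F] {u v : α → F} (hu : MemLp u 2 μ) (hv : MemLp v 2 μ) {c : ℝ}
    (hc : 0 < c) :
    ∫ x, ‖v x‖ ^ 2 ∂μ ≤
      (1 + c) * ∫ x, ‖u x‖ ^ 2 ∂μ + (1 + 1 / c) * ∫ x, ‖v x - u x‖ ^ 2 ∂μ := by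
  have hu₂ := (hu.integrable_norm_pow two_ne_zero).const_mul (1 + c)
  have hvu₂ : Integrable (fun x => (1 + 1 / c) * ‖v x - u x‖ ^ 2) μ :=
    ((hv.sub hu).integrable_norm_pow two_ne_zero).const_mul (1 + 1 / c)
  rw [← integral_const_mul, ← integral_const_mul, ← integral_add hu₂ hvu₂]
  exact integral_mono (hv.integrable_norm_pow two_ne_zero) (hu₂.add hvu₂)
    fun x => norm_sq_le_add_norm_sub_sq (u x) (v x) hc

variable {φ ψ : E2 → ℂ}

lemma l2Sq_le_add (hφ : MemLp φ 2 volume) (hψ : MemLp ψ 2 volume) {c : ℝ} (hc : 0 < c) :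
    l2Sq ψ ≤ (1 + c) * l2Sq φ + (1 + 1 / c) * l2Sq (fun x => ψ x - φ x) :=
  integral_norm_sq_le_add hφ hψ hc

lemma gradSq_le_add (hφ : MemH1 φ) (hψ : MemH1 ψ) {c : ℝ} (hc : 0 < c) :
    gradSq ψ ≤ (1 + c) * gradSq φ + (1 + 1 / c) * gradSq (fun x => ψ x - φ x) := by
  rw [gradSq, gradSq, gradSq]
  simp only [fderiv_fun_sub (hψ.2.1 _) (hφ.2.1 _)]
  exact integral_norm_sq_le_add hφ.2.2 hψ.2.2 hc

lemma integral_Fmu_one_sub_le (hφ : MemLp φ 2 volume) (hφe : ExpIntegrable φ)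
    (hψ : MemLp ψ 2 volume) (hψe : ExpIntegrable ψ) {c : ℝ} (hc : 0 < c) :
    (∫ x, Fmu 1 (φ x)) - ∫ x, Fmu 1 (ψ x) ≤
      (c * (∫ x, ‖φ x‖ ^ 2 * exp (8 * π * ‖φ x‖ ^ 2)) + l2Sq (fun x => ψ x - φ x) / c) / 2 := by
  have hK := (hφe.integrable_sq_norm_mul_exp hφ.aestronglyMeasurable
    (by positivity : (0 : ℝ) ≤ 8 * π)).const_mul c
  have hd : Integrable (fun x => ‖ψ x - φ x‖ ^ 2 / c) :=
    ((hψ.sub hφ).integrable_norm_pow two_ne_zero).div_const c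
  have hpoint : ∀ x, Fmu 1 (φ x) - Fmu 1 (ψ x) ≤
      (c * (‖φ x‖ ^ 2 * exp (8 * π * ‖φ x‖ ^ 2)) + ‖ψ x - φ x‖ ^ 2 / c) / 2 := by
    intro x
    have hsub := Fmu_one_sub_le (φ x) (ψ x)
    rw [norm_sub_rev] at hsub
    set K := ‖φ x‖ * exp (4 * π * ‖φ x‖ ^ 2)
    have hK2 : K ^ 2 = ‖φ x‖ ^ 2 * exp (8 * π * ‖φ x‖ ^ 2) := by
      rw [mul_pow, ← exp_nat_mul]; ring_nf
    have := two_mul_mul_le_mul_sq_add_sq_div K ‖ψ x - φ x‖ hc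
    rw [← hK2]
    linarith
  rw [← integral_sub (hφe.integrable_Fmu_one hφ.aestronglyMeasurable)
    (hψe.integrable_Fmu_one hψ.aestronglyMeasurable), l2Sq, ← integral_const_mul,
    ← integral_div, ← integral_add hK hd, ← integral_div]
  exact integral_mono ((hφe.integrable_Fmu_one hφ.aestronglyMeasurable).sub
    (hψe.integrable_Fmu_one hψ.aestronglyMeasurable)) ((hK.add hd).div_const 2) hpoint

end Perturbation

lemma exists_pos_mul_add_lt {a η : ℝ} (ha : 0 ≤ a) (hη : 0 < η) :
    ∃ c > 0, ∃ δ > 0, ∀ h < δ, c * a + (1 + 1 / c) * h < η := by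
  set c := η / (2 * (a + 1))
  have hc : 0 < c := by positivity
  refine ⟨c, hc, η / (2 * (1 + 1 / c)), by positivity, fun h hh => ?_⟩
  have hca : c * a < η / 2 := by
    rw [div_mul_eq_mul_div, div_lt_div_iff₀ (by positivity) two_pos]
    nlinarith
  have hh' : (1 + 1 / c) * h < η / 2 := by
    rw [lt_div_iff₀ (by positivity)] at hh
    linarith
  linarith

def h1NormSq (u : E2 → ℂ) : ℝ := l2Sq u + gradSq u

section Semicontinuity

variable {φ : E2 → ℂ}

lemma exists_gradSq_lt_add (hφ : MemH1 φ) {η : ℝ} (hη : 0 < η) :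
    ∃ δ > 0, ∀ ψ, MemH1 ψ → h1NormSq (fun x => ψ x - φ x) < δ → gradSq ψ < gradSq φ + η := by
  obtain ⟨c, hc, δ, hδ, hlt⟩ := exists_pos_mul_add_lt (gradSq_nonneg φ) hη
  refine ⟨δ, hδ, fun ψ hψ hclose => ?_⟩
  have hle := gradSq_le_add hφ hψ hc
  have hgrad : (1 + 1 / c) * gradSq (fun x => ψ x - φ x) ≤
      (1 + 1 / c) * h1NormSq (fun x => ψ x - φ x) := by
    unfold h1NormSq
    gcongr
    exact le_add_of_nonneg_left (l2Sq_nonneg _)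
  linarith [hlt _ hclose]

lemma Smu_one_le_add (hφ : MemH1 φ) (hφe : ExpIntegrable φ) {ψ : E2 → ℂ} (hψ : MemH1 ψ)
    (hψe : ExpIntegrable ψ) {c : ℝ} (hc : 0 < c) :
    Smu 1 ψ ≤ Smu 1 φ +
      c * ((gradSq φ + l2Sq φ + ∫ x, ‖φ x‖ ^ 2 * exp (8 * π * ‖φ x‖ ^ 2)) / 2) +
      (1 + 1 / c) * h1NormSq (fun x => ψ x - φ x) := by
  have hgrad := gradSq_le_add hφ hψ hc
  have hl2 := l2Sq_le_add hφ.1 hψ.1 hc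
  have hF := integral_Fmu_one_sub_le hφ.1 hφe hψ.1 hψe hc
  have hd₀ : 0 ≤ (1 + 1 / c) * gradSq (fun x => ψ x - φ x) := by
    have := gradSq_nonneg (fun x => ψ x - φ x); positivity
  have hl₀ := l2Sq_nonneg (fun x => ψ x - φ x)
  have hsplit : (1 + 1 / c) * l2Sq (fun x => ψ x - φ x) =
      l2Sq (fun x => ψ x - φ x) + l2Sq (fun x => ψ x - φ x) / c := by ring
  simp only [Smu, Emu, h1NormSq]
  linarith

lemma exists_Smu_one_lt_add (hφ : MemH1 φ) (hφe : ExpIntegrable φ) {η : ℝ} (hη : 0 < η) :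
    ∃ δ > 0, ∀ ψ, MemH1 ψ → ExpIntegrable ψ → h1NormSq (fun x => ψ x - φ x) < δ →
      Smu 1 ψ < Smu 1 φ + η := by
  have hB : 0 ≤ ∫ x, ‖φ x‖ ^ 2 * exp (8 * π * ‖φ x‖ ^ 2) := integral_nonneg fun _ => by positivity
  obtain ⟨c, hc, δ, hδ, hlt⟩ := exists_pos_mul_add_lt
    (by linarith [gradSq_nonneg φ, l2Sq_nonneg φ] :
      0 ≤ (gradSq φ + l2Sq φ + ∫ x, ‖φ x‖ ^ 2 * exp (8 * π * ‖φ x‖ ^ 2)) / 2) hη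
  exact ⟨δ, hδ, fun ψ hψ hψe hclose =>
    (Smu_one_le_add hφ hφe hψ hψe hc).trans_lt (by linarith [hlt _ hclose])⟩

end Semicontinuity

theorem Abar_plus_eq_and_open_general
    (Q : E2 → ℂ) (hSQpos : 0 < Smu 1 Q)
    (hPchar : IsLeast {s : ℝ | ∃ ψ : E2 → ℂ, MemH1 ψ ∧ ExpIntegrable ψ ∧
        ¬ ψ =ᵐ[volume] (0 : E2 → ℂ) ∧ Pmu 1 ψ = 0 ∧ s = Smu 1 ψ} (Smu 1 Q)) :
    -- `𝒜̄⁺₁ = 𝒜⁺₁ ∪ {0}`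
    (∀ φ : E2 → ℂ, MemH1 φ → ExpIntegrable φ →
      ((Smu 1 φ < Smu 1 Q ∧ 0 ≤ Pmu 1 φ) ↔
        ((¬ φ =ᵐ[volume] (0 : E2 → ℂ) ∧ Smu 1 φ < Smu 1 Q ∧ 0 < Pmu 1 φ) ∨
          φ =ᵐ[volume] (0 : E2 → ℂ)))) ∧
    -- `𝒜̄⁺₁` is open in `H¹`
    (∀ φ : E2 → ℂ, MemH1 φ → ExpIntegrable φ → Smu 1 φ < Smu 1 Q → 0 ≤ Pmu 1 φ →
      ∃ ε : ℝ, 0 < ε ∧ ∀ ψ : E2 → ℂ, MemH1 ψ → ExpIntegrable ψ →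
        l2Sq (fun x => ψ x - φ x) + gradSq (fun x => ψ x - φ x) < ε ^ 2 →
        Smu 1 ψ < Smu 1 Q ∧ 0 ≤ Pmu 1 ψ) := by
  have hlow : ∀ φ : E2 → ℂ, MemH1 φ → ExpIntegrable φ → ¬ φ =ᵐ[volume] 0 → Pmu 1 φ = 0 →
      Smu 1 Q ≤ Smu 1 φ := fun φ hφ hφe hne hP => hPchar.2 ⟨φ, hφ, hφe, hne, hP, rfl⟩
  refine ⟨fun φ hφ hφe => ⟨fun ⟨hS, hP⟩ => ?_, ?_⟩, fun φ hφ hφe hS hP => ?_⟩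
  · by_cases hz : φ =ᵐ[volume] 0
    · exact .inr hz
    · exact .inl ⟨hz, hS, hP.lt_of_ne fun h => hS.not_ge (hlow φ hφ hφe hz h.symm)⟩
  · rintro (⟨-, hS, hP⟩ | hz)
    · exact ⟨hS, hP.le⟩
    · rw [hφ.eq_zero_of_ae_eq_zero hz, Smu_one_zero, Pmu_one_zero]
      exact ⟨hSQpos, le_rfl⟩
  · have hgrad : gradSq φ < 2 * Smu 1 Q := by linarith [Smu_one_eq φ]
    obtain ⟨δ₁, hδ₁, hgradψ⟩ := exists_gradSq_lt_add hφ (sub_pos.2 hgrad)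
    obtain ⟨δ₂, hδ₂, hSψ⟩ := exists_Smu_one_lt_add hφ hφe (sub_pos.2 hS)
    refine ⟨√(min δ₁ δ₂), by positivity, fun ψ hψ hψe hclose => ?_⟩
    rw [sq_sqrt (by positivity)] at hclose
    have hgradψ := hgradψ ψ hψ (hclose.trans_le (min_le_left _ _))
    refine ⟨by linarith [hSψ ψ hψ hψe (hclose.trans_le (min_le_right _ _))],
      le_of_not_gt fun hneg => ?_⟩
    linarith [two_mul_lt_gradSq_of_Pmu_one_neg hSQpos hlow hψ hψe hneg]

/-- the set `𝒜̄⁺₁ = {φ ∈ H¹ : S₁(φ) < S₁(Q₁), P₁(φ) ≥ 0}` equals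
`𝒜⁺₁ ∪ {0}` and is open in `H¹(ℝ²)` (openness expressed via `H¹`-balls). -/
theorem Abar_plus_eq_and_open
    (Q : E2 → ℂ) (hQ : IsGroundState 1 Q) (hSQpos : 0 < Smu 1 Q)
    (hPchar : IsLeast {s : ℝ | ∃ ψ : E2 → ℂ, MemH1 ψ ∧ ExpIntegrable ψ ∧
        ¬ ψ =ᵐ[volume] (0 : E2 → ℂ) ∧ Pmu 1 ψ = 0 ∧ s = Smu 1 ψ} (Smu 1 Q)) :
    -- `𝒜̄⁺₁ = 𝒜⁺₁ ∪ {0}`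
    (∀ φ : E2 → ℂ, MemH1 φ → ExpIntegrable φ →
      ((Smu 1 φ < Smu 1 Q ∧ 0 ≤ Pmu 1 φ) ↔
        ((¬ φ =ᵐ[volume] (0 : E2 → ℂ) ∧ Smu 1 φ < Smu 1 Q ∧ 0 < Pmu 1 φ) ∨
          φ =ᵐ[volume] (0 : E2 → ℂ)))) ∧
    -- `𝒜̄⁺₁` is open in `H¹`
    (∀ φ : E2 → ℂ, MemH1 φ → ExpIntegrable φ → Smu 1 φ < Smu 1 Q → 0 ≤ Pmu 1 φ →
      ∃ ε : ℝ, 0 < ε ∧ ∀ ψ : E2 → ℂ, MemH1 ψ → ExpIntegrable ψ →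
        l2Sq (fun x => ψ x - φ x) + gradSq (fun x => ψ x - φ x) < ε ^ 2 →
        Smu 1 ψ < Smu 1 Q ∧ 0 ≤ Pmu 1 ψ) :=
  Abar_plus_eq_and_open_general Q hSQpos hPchar
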